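/- arXiv:2601.02696 — 3 statements merged into one kernel-verified Lean document; each statement's English description precedes it below -/
import Mathlib

section
/- Let K = K(N,D) be a fractal square. If (K⁽²⁾ + d₁) ∩ (K⁽²⁾ + d₂) ≠ ∅ for distinct d₁, d₂ ∈ D, then there exist e₁, e₂ ∈ D₂ such that ((K + e₁)/N² + d₁) ∩ ((K + e₂)/N² + d₂) ≠ ∅; in particular, (K + d₁) ∩ (K + d₂) ≠ ∅. -/
open Set Metric Topology Pointwise Filter

noncomputable section

abbrev Plane : Type := EuclideanSpace ℝ (Fin 2)

/-- The closed unit square `[0,1]²` in the plane. -/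
def unitSq : Set Plane := {x | x 0 ∈ Icc (0:ℝ) 1 ∧ x 1 ∈ Icc (0:ℝ) 1}

/-- The embedding of `ℤ²` into the plane. -/
def emb (d : ℤ × ℤ) : Plane := WithLp.toLp 2 ![(d.1 : ℝ), (d.2 : ℝ)]

/-- The `n`-th approximation `K⁽ⁿ⁾` of the fractal square:
`K⁽⁰⁾ = [0,1]²`, `K⁽ⁿ⁾ = ⋃_{d ∈ D} (K⁽ⁿ⁻¹⁾ + d) / N`. -/
def approx (N : ℕ) (D : Finset (ℤ × ℤ)) : ℕ → Set Plane
  | 0 => unitSq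
  | n + 1 => ⋃ d ∈ D, (fun x => (N : ℝ)⁻¹ • (x + emb d)) '' approx N D n

/-- The fractal square `K = K(N, D) = ⋂_{n ≥ 1} K⁽ⁿ⁾`. -/
def FS (N : ℕ) (D : Finset (ℤ × ℤ)) : Set Plane := ⋂ n : ℕ, approx N D (n + 1)

/-- The lattice `ℤ² ⊆ ℝ²`. -/
def lattice : Set Plane := Set.range emb

/-- `H = K + ℤ²`. -/
def orbitH (N : ℕ) (D : Finset (ℤ × ℤ)) : Set Plane := FS N D + lattice

/-- A digit set for order `N`: a subset of `{0, …, N-1}²` with at least two elements. -/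
def IsDigitSet (N : ℕ) (D : Finset (ℤ × ℤ)) : Prop :=
  2 ≤ D.card ∧ ∀ d ∈ D, 0 ≤ d.1 ∧ d.1 ≤ (N : ℤ) - 1 ∧ 0 ≤ d.2 ∧ d.2 ≤ (N : ℤ) - 1

/-- The second iterated digit set `D₂ = D + N·D`. -/
def digits2 (N : ℕ) (D : Finset (ℤ × ℤ)) : Set (ℤ × ℤ) :=
  {e | ∃ d ∈ D, ∃ d' ∈ D, e = d + (N : ℤ) • d'}

namespace Stmt2Aux

lemma emb_apply0 (d : ℤ × ℤ) : emb d 0 = (d.1 : ℝ) := rfl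
lemma emb_apply1 (d : ℤ × ℤ) : emb d 1 = (d.2 : ℝ) := rfl

lemma emb_add (p q : ℤ × ℤ) : emb (p + q) = emb p + emb q := by
  ext i; fin_cases i <;> simp [emb]

lemma emb_sub (p q : ℤ × ℤ) : emb (p - q) = emb p - emb q := by
  ext i; fin_cases i <;> simp [emb]

lemma emb_zsmul (n : ℤ) (d : ℤ × ℤ) : emb (n • d) = (n : ℝ) • emb d := by
  ext i; fin_cases i <;> simp [emb]

lemma unitSq_eq : unitSq = (PiLp.continuousLinearEquiv 2 ℝ (fun _ : Fin 2 => ℝ)).toHomeomorph ⁻¹'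
      (Set.univ.pi fun _ => Icc (0:ℝ) 1) := by
  ext x
  simp only [unitSq, mem_setOf_eq, mem_preimage, ContinuousLinearEquiv.coe_toHomeomorph,
    mem_univ_pi, mem_Icc, Fin.forall_fin_two, PiLp.coe_continuousLinearEquiv]

lemma unitSq_compact : IsCompact unitSq := by
  rw [unitSq_eq, Homeomorph.isCompact_preimage]
  exact isCompact_univ_pi fun _ => isCompact_Icc

lemma unitSq_nonempty : unitSq.Nonempty := ⟨0, by constructor <;> simp⟩

variable {N : ℕ} {D : Finset (ℤ × ℤ)}

lemma mem_approx_succ (hN : 2 ≤ N) {n : ℕ} {x : Plane} :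
    x ∈ approx N D (n+1) ↔ ∃ d ∈ D, (N:ℝ) • x - emb d ∈ approx N D n := by
  have hN0 : (N:ℝ) ≠ 0 := by positivity
  simp only [approx, Set.mem_iUnion, Set.mem_image, exists_prop]
  constructor
  · rintro ⟨d, hd, y, hy, rfl⟩
    refine ⟨d, hd, ?_⟩
    rwa [smul_inv_smul₀ hN0, add_sub_cancel_right]
  · rintro ⟨d, hd, h⟩
    exact ⟨d, hd, (N:ℝ) • x - emb d, h, by rw [sub_add_cancel, inv_smul_smul₀ hN0]⟩

lemma approx_subset_unitSq (hN : 2 ≤ N) (hD : IsDigitSet N D) :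
    ∀ n, approx N D n ⊆ unitSq := by
  intro n
  induction n with
  | zero => exact subset_rfl
  | succ n ih =>
    intro x hx
    obtain ⟨d, hd, hy⟩ := (mem_approx_succ hN).1 hx
    have hy' := ih hy
    obtain ⟨⟨h1, h2⟩, h3, h4⟩ := hy'
    obtain ⟨hd1, hd2, hd3, hd4⟩ := hD.2 d hd
    have e0 : ((N:ℝ) • x - emb d) 0 = (N:ℝ) * x 0 - (d.1 : ℝ) := rfl
    have e1 : ((N:ℝ) • x - emb d) 1 = (N:ℝ) * x 1 - (d.2 : ℝ) := rfl
    rw [e0] at h1 h2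
    rw [e1] at h3 h4
    have hNpos : (0:ℝ) < N := by positivity
    have hd1' : (0:ℝ) ≤ (d.1 : ℝ) := by exact_mod_cast hd1
    have hd2' : (d.1 : ℝ) ≤ (N:ℝ) - 1 := by exact_mod_cast hd2
    have hd3' : (0:ℝ) ≤ (d.2 : ℝ) := by exact_mod_cast hd3
    have hd4' : (d.2 : ℝ) ≤ (N:ℝ) - 1 := by exact_mod_cast hd4
    constructor
    · constructor
      · nlinarith
      · nlinarith
    · constructor
      · nlinarith
      · nlinarith

lemma approx_succ_subset (hN : 2 ≤ N) (hD : IsDigitSet N D) :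
    ∀ n, approx N D (n+1) ⊆ approx N D n := by
  intro n
  induction n with
  | zero => exact approx_subset_unitSq hN hD 1
  | succ n ih =>
    intro x hx
    obtain ⟨d, hd, hy⟩ := (mem_approx_succ hN).1 hx
    exact (mem_approx_succ hN).2 ⟨d, hd, ih hy⟩

lemma approx_antitone (hN : 2 ≤ N) (hD : IsDigitSet N D) {m n : ℕ} (h : m ≤ n) :
    approx N D n ⊆ approx N D m := by
  induction h with
  | refl => exact subset_rfl
  | step h ih => exact fun x hx => ih (approx_succ_subset hN hD _ hx)

lemma approx_compact : ∀ n, IsCompact (approx N D n) := by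
  intro n
  induction n with
  | zero => exact unitSq_compact
  | succ n ih =>
    refine D.finite_toSet.isCompact_biUnion fun d _ => ?_
    exact ih.image (by fun_prop)

lemma approx_nonempty (hD : IsDigitSet N D) : ∀ n, (approx N D n).Nonempty := by
  intro n
  obtain ⟨d, hd⟩ := Finset.card_pos.1 (Nat.lt_of_lt_of_le Nat.zero_lt_two hD.1)
  induction n with
  | zero => exact unitSq_nonempty
  | succ n ih =>
    obtain ⟨x, hx⟩ := ih
    exact ⟨_, Set.mem_biUnion hd ⟨x, hx, rfl⟩⟩

/-- `Γₙ`: the translate by `p` of `K⁽ⁿ⁾` meets `K⁽ⁿ⁾`. -/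
def Gam (N : ℕ) (D : Finset (ℤ × ℤ)) (n : ℕ) (p : ℤ × ℤ) : Prop :=
  (approx N D n ∩ (fun x => x + emb p) '' approx N D n).Nonempty

lemma gam_mono (hN : 2 ≤ N) (hD : IsDigitSet N D) {n : ℕ} {p : ℤ × ℤ}
    (h : Gam N D (n+1) p) : Gam N D n p := by
  obtain ⟨x, hx1, y, hy, rfl⟩ := h
  exact ⟨_, approx_succ_subset hN hD n hx1, y, approx_succ_subset hN hD n hy, rfl⟩

lemma gam_bound (hN : 2 ≤ N) (hD : IsDigitSet N D) {n : ℕ} {p : ℤ × ℤ}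
    (h : Gam N D n p) : p.1 ≤ 1 ∧ -1 ≤ p.1 ∧ p.2 ≤ 1 ∧ -1 ≤ p.2 := by
  have h0 : Gam N D 0 p := by
    induction n with
    | zero => exact h
    | succ n ih => exact ih (gam_mono hN hD h)
  obtain ⟨x, ⟨⟨a1, a2⟩, a3, a4⟩, y, ⟨⟨b1, b2⟩, b3, b4⟩, rfl⟩ := h0
  have a1' : (0:ℝ) ≤ y 0 + (p.1 : ℝ) := a1
  have a2' : y 0 + (p.1 : ℝ) ≤ 1 := a2
  have a3' : (0:ℝ) ≤ y 1 + (p.2 : ℝ) := a3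
  have a4' : y 1 + (p.2 : ℝ) ≤ 1 := a4
  have c1 : (p.1 : ℝ) ≤ 1 := by linarith
  have c2 : (-1 : ℝ) ≤ (p.1 : ℝ) := by linarith
  have c3 : (p.2 : ℝ) ≤ 1 := by linarith
  have c4 : (-1 : ℝ) ≤ (p.2 : ℝ) := by linarith
  exact ⟨by exact_mod_cast c1, by exact_mod_cast c2, by exact_mod_cast c3, by exact_mod_cast c4⟩

lemma gam_zero {p : ℤ × ℤ} (h1 : p.1 ≤ 1) (h2 : -1 ≤ p.1) (h3 : p.2 ≤ 1) (h4 : -1 ≤ p.2) :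
    Gam N D 0 p := by
  have h1' : (p.1:ℝ) ≤ 1 := by exact_mod_cast h1
  have h2' : (-1:ℝ) ≤ (p.1:ℝ) := by exact_mod_cast h2
  have h3' : (p.2:ℝ) ≤ 1 := by exact_mod_cast h3
  have h4' : (-1:ℝ) ≤ (p.2:ℝ) := by exact_mod_cast h4
  refine ⟨WithLp.toLp 2 ![max (p.1:ℝ) 0, max (p.2:ℝ) 0], ⟨?_, ?_⟩,
    WithLp.toLp 2 ![max (p.1:ℝ) 0 - (p.1:ℝ), max (p.2:ℝ) 0 - (p.2:ℝ)], ⟨?_, ?_⟩, ?_⟩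
  · simp only [Matrix.cons_val_zero, mem_Icc, PiLp.toLp_apply]
    exact ⟨le_max_right _ _, max_le h1' zero_le_one⟩
  · simp only [Matrix.cons_val_one, Matrix.head_cons, mem_Icc, PiLp.toLp_apply]
    exact ⟨le_max_right _ _, max_le h3' zero_le_one⟩
  · simp only [Matrix.cons_val_zero, mem_Icc, PiLp.toLp_apply]
    constructor
    · have := le_max_left (p.1:ℝ) 0; linarith
    · have : max (p.1:ℝ) 0 ≤ (p.1:ℝ) + 1 := max_le (by linarith) (by linarith)
      linarith
  · simp only [Matrix.cons_val_one, Matrix.head_cons, mem_Icc, PiLp.toLp_apply,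
      Matrix.cons_val_zero]
    constructor
    · have := le_max_left (p.2:ℝ) 0; linarith
    · have : max (p.2:ℝ) 0 ≤ (p.2:ℝ) + 1 := max_le (by linarith) (by linarith)
      linarith
  · ext i
    fin_cases i <;> simp [emb] <;> ring


lemma gam_succ_elim (hN : 2 ≤ N) {n : ℕ} {p : ℤ × ℤ} (h : Gam N D (n+1) p) :
    ∃ a ∈ D, ∃ b ∈ D, Gam N D n (b - a + (N:ℤ) • p) := by
  obtain ⟨x, hx, w, hw, hxw⟩ := h
  obtain ⟨a, ha, hu⟩ := (mem_approx_succ hN).1 hx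
  obtain ⟨b, hb, hv⟩ := (mem_approx_succ hN).1 hw
  refine ⟨a, ha, b, hb, (N:ℝ) • x - emb a, hu, (N:ℝ) • w - emb b, hv, ?_⟩
  simp only []
  rw [emb_add, emb_sub, emb_zsmul, ← hxw]
  simp only []
  rw [smul_add]
  abel

lemma gam_succ_intro (hN : 2 ≤ N) {n : ℕ} {p a b : ℤ × ℤ} (ha : a ∈ D) (hb : b ∈ D)
    (h : Gam N D n (b - a + (N:ℤ) • p)) : Gam N D (n+1) p := by
  obtain ⟨u, hu, v, hv, hvu⟩ := h
  have hN0 : (N:ℝ) ≠ 0 := by positivity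
  refine ⟨(N:ℝ)⁻¹ • (u + emb a), (mem_approx_succ hN).2 ⟨a, ha, ?_⟩,
    (N:ℝ)⁻¹ • (v + emb b), (mem_approx_succ hN).2 ⟨b, hb, ?_⟩, ?_⟩
  · rw [smul_inv_smul₀ hN0, add_sub_cancel_right]; exact hu
  · rw [smul_inv_smul₀ hN0, add_sub_cancel_right]; exact hv
  · simp only []
    rw [← hvu]
    simp only []
    rw [emb_add, emb_sub, emb_zsmul]
    match_scalars <;> field_simp <;> ring

lemma gam_selfloop (hN : 2 ≤ N) (hD : IsDigitSet N D) {p a b : ℤ × ℤ}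
    (ha : a ∈ D) (hb : b ∈ D) (hloop : b - a + (N:ℤ) • p = p) : ∀ n, Gam N D n p := by
  obtain ⟨ha1, ha2, ha3, ha4⟩ := hD.2 a ha
  obtain ⟨hb1, hb2, hb3, hb4⟩ := hD.2 b hb
  have h1 : b.1 - a.1 + (N:ℤ) * p.1 = p.1 := by
    have := congrArg Prod.fst hloop
    simpa [smul_eq_mul] using this
  have h2 : b.2 - a.2 + (N:ℤ) * p.2 = p.2 := by
    have := congrArg Prod.snd hloop
    simpa [smul_eq_mul] using this
  have hN' : (2:ℤ) ≤ (N:ℤ) := by exact_mod_cast hN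
  have hp1 : p.1 ≤ 1 := by nlinarith
  have hp2 : -1 ≤ p.1 := by nlinarith
  have hp3 : p.2 ≤ 1 := by nlinarith
  have hp4 : -1 ≤ p.2 := by nlinarith
  intro n
  induction n with
  | zero => exact gam_zero hp1 hp2 hp3 hp4
  | succ n ih => exact gam_succ_intro hN ha hb (by rwa [hloop])

lemma gam_inf (hN : 2 ≤ N) (hD : IsDigitSet N D) {p : ℤ × ℤ} (h : ∀ n, Gam N D n p) :
    ∃ v ∈ FS N D, v + emb p ∈ FS N D := by
  set C : ℕ → Set Plane := fun n =>
    approx N D (n+1) ∩ (fun x => x + emb p) '' approx N D (n+1) with hC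
  have hsub : ∀ n, C (n+1) ⊆ C n := fun n =>
    inter_subset_inter (approx_succ_subset hN hD _)
      (image_mono (approx_succ_subset hN hD _))
  have hne : ∀ n, (C n).Nonempty := fun n => h (n+1)
  have hcl : ∀ n, IsClosed (C n) := by
    intro n
    exact (approx_compact (N := N) (D := D) (n+1)).isClosed.inter
      ((approx_compact _).image (by fun_prop)).isClosed
  have hcpt : IsCompact (C 0) :=
    (approx_compact _).inter_right ((approx_compact _).image (by fun_prop)).isClosed
  obtain ⟨x, hx⟩ :=
    IsCompact.nonempty_iInter_of_sequence_nonempty_isCompact_isClosed C hsub hne hcpt hcl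
  have hx' : ∀ n, x ∈ C n := by
    intro n; exact mem_iInter.1 hx n
  refine ⟨x - emb p, ?_, ?_⟩
  · rw [FS, mem_iInter]; intro n
    obtain ⟨-, w, hw, hwx⟩ := hx' n
    have hwe : w = x - emb p := by rw [← hwx]; simp
    rwa [← hwe]
  · rw [sub_add_cancel, FS, mem_iInter]
    intro n; exact (hx' n).1

lemma fs_decomp (hN : 2 ≤ N) (hD : IsDigitSet N D) {x : Plane} (hx : x ∈ FS N D) :
    ∃ d ∈ D, (N:ℝ) • x - emb d ∈ FS N D := by
  have hx' : ∀ n, x ∈ approx N D (n+1) := fun n => mem_iInter.1 hx n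
  choose g hg hmem using fun n => (mem_approx_succ hN).1 (hx' n)
  obtain ⟨⟨d, hd⟩, hinf⟩ :=
    Finite.exists_infinite_fiber (fun n => (⟨g n, hg n⟩ : {d // d ∈ D}))
  have hinf' : {n : ℕ | g n = d}.Infinite := by
    rw [← Set.infinite_coe_iff]
    exact Infinite.of_injective
      (fun m : ((fun n => (⟨g n, hg n⟩ : {d // d ∈ D})) ⁻¹' {⟨d, hd⟩}) =>
        (⟨m.1, by
          have hm2 := m.2
          simp only [Set.mem_preimage, Set.mem_singleton_iff] at hm2
          exact congrArg Subtype.val hm2⟩ : {n : ℕ | g n = d}))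
      fun m m' h => Subtype.ext (by simpa using congrArg Subtype.val h)
  refine ⟨d, hd, ?_⟩
  rw [FS, mem_iInter]
  intro n
  obtain ⟨m, hm, hnm⟩ := hinf'.exists_gt (n+1)
  have : (N:ℝ) • x - emb d ∈ approx N D m := by
    have := hmem m
    rwa [hm] at this
  exact approx_antitone hN hD (le_of_lt hnm) this


lemma fs_decomp2 (hN : 2 ≤ N) (hD : IsDigitSet N D) {x : Plane} (hx : x ∈ FS N D) :
    ∃ e ∈ digits2 N D, ∃ q ∈ FS N D, ((N:ℝ) ^ 2)⁻¹ • (q + emb e) = x := by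
  obtain ⟨d', hd', h1⟩ := fs_decomp hN hD hx
  obtain ⟨d, hd, h2⟩ := fs_decomp hN hD h1
  have hN0 : (N:ℝ) ≠ 0 := by positivity
  refine ⟨d + (N:ℤ) • d', ⟨d, hd, d', hd', rfl⟩,
    (N:ℝ) • ((N:ℝ) • x - emb d') - emb d, h2, ?_⟩
  rw [emb_add, emb_zsmul]
  match_scalars <;> (field_simp; try ring)

lemma key_arith (n : ℤ) (hn : 2 ≤ n) {a1 a2 b1 b2 a1' a2' b1' b2' p1 p2 q1 q2 r1 r2 : ℤ}
    (ha1 : 0 ≤ a1) (ha2 : a1 ≤ n - 1) (ha3 : 0 ≤ a2) (ha4 : a2 ≤ n - 1)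
    (hb1 : 0 ≤ b1) (hb2 : b1 ≤ n - 1) (hb3 : 0 ≤ b2) (hb4 : b2 ≤ n - 1)
    (ha1' : 0 ≤ a1') (ha2' : a1' ≤ n - 1) (ha3' : 0 ≤ a2') (ha4' : a2' ≤ n - 1)
    (hb1' : 0 ≤ b1') (hb2' : b1' ≤ n - 1) (hb3' : 0 ≤ b2') (hb4' : b2' ≤ n - 1)
    (hp1 : p1 ≤ 1) (hp2 : -1 ≤ p1) (hp3 : p2 ≤ 1) (hp4 : -1 ≤ p2)
    (hq1' : q1 ≤ 1) (hq2' : -1 ≤ q1) (hq3' : q2 ≤ 1) (hq4' : -1 ≤ q2)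
    (hr1' : r1 ≤ 1) (hr2' : -1 ≤ r1) (hr3' : r2 ≤ 1) (hr4' : -1 ≤ r2)
    (hq1 : q1 = b1 - a1 + n * p1) (hq2 : q2 = b2 - a2 + n * p2)
    (hr1 : r1 = b1' - a1' + n * q1) (hr2 : r2 = b2' - a2' + n * q2)
    (hp0 : ¬(p1 = 0 ∧ p2 = 0)) :
    (q1 = p1 ∧ q2 = p2) ∨ (r1 = q1 ∧ r2 = q2) := by
  interval_cases p1 <;> interval_cases p2 <;> interval_cases q1 <;> interval_cases q2 <;> omega

end Stmt2Aux

open Stmt2Aux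

/-- If `(K⁽²⁾ + d₁) ∩ (K⁽²⁾ + d₂) ≠ ∅` for distinct `d₁, d₂ ∈ D`, then there
exist `e₁, e₂ ∈ D₂` with `((K + e₁)/N² + d₁) ∩ ((K + e₂)/N² + d₂) ≠ ∅`; in
particular `(K + d₁) ∩ (K + d₂) ≠ ∅`. -/
theorem stmt2 (N : ℕ) (hN : 2 ≤ N) (D : Finset (ℤ × ℤ)) (hD : IsDigitSet N D)
    (d₁ d₂ : ℤ × ℤ) (hd₁ : d₁ ∈ D) (hd₂ : d₂ ∈ D) (hne : d₁ ≠ d₂)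
    (hmeet : ((fun x => x + emb d₁) '' approx N D 2 ∩
      (fun x => x + emb d₂) '' approx N D 2).Nonempty) :
    (∃ e₁ ∈ digits2 N D, ∃ e₂ ∈ digits2 N D,
        ((fun x => ((N : ℝ) ^ 2)⁻¹ • (x + emb e₁) + emb d₁) '' FS N D ∩
          (fun x => ((N : ℝ) ^ 2)⁻¹ • (x + emb e₂) + emb d₂) '' FS N D).Nonempty) ∧
      ((fun x => x + emb d₁) '' FS N D ∩
        (fun x => x + emb d₂) '' FS N D).Nonempty := by
  set δ : ℤ × ℤ := d₂ - d₁ with hδ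
  -- K⁽²⁾ translates meet iff Gam 2 δ
  have hGam2 : Gam N D 2 δ := by
    obtain ⟨x, ⟨u, hu, hux⟩, w, hw, hwx⟩ := hmeet
    refine ⟨u, hu, w, hw, ?_⟩
    simp only [] at hux hwx ⊢
    rw [emb_sub]
    rw [← hux] at hwx
    -- hwx : w + emb d₂ = u + emb d₁
    have : w + emb d₂ - emb d₁ = u := by rw [hwx]; abel
    rw [← this]; abel
  obtain ⟨a, ha, b, hb, hGam1⟩ := gam_succ_elim hN hGam2
  set q : ℤ × ℤ := b - a + (N:ℤ) • δ with hq
  obtain ⟨a', ha', b', hb', hGam0⟩ := gam_succ_elim hN hGam1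
  set r : ℤ × ℤ := b' - a' + (N:ℤ) • q with hr
  obtain ⟨bδ1, bδ2, bδ3, bδ4⟩ := gam_bound hN hD hGam2
  obtain ⟨bq1, bq2, bq3, bq4⟩ := gam_bound hN hD hGam1
  obtain ⟨br1, br2, br3, br4⟩ := gam_bound hN hD hGam0
  obtain ⟨ha1, ha2, ha3, ha4⟩ := hD.2 a ha
  obtain ⟨hb1, hb2, hb3, hb4⟩ := hD.2 b hb
  obtain ⟨ha1', ha2', ha3', ha4'⟩ := hD.2 a' ha'
  obtain ⟨hb1', hb2', hb3', hb4'⟩ := hD.2 b' hb'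
  have hδ0 : ¬(δ.1 = 0 ∧ δ.2 = 0) := by
    rintro ⟨h1, h2⟩
    apply hne
    have e1 : d₂.1 - d₁.1 = 0 := h1
    have e2 : d₂.2 - d₁.2 = 0 := h2
    ext <;> omega
  have hq1 : q.1 = b.1 - a.1 + (N:ℤ) * δ.1 := by simp [hq, smul_eq_mul]
  have hq2 : q.2 = b.2 - a.2 + (N:ℤ) * δ.2 := by simp [hq, smul_eq_mul]
  have hr1 : r.1 = b'.1 - a'.1 + (N:ℤ) * q.1 := by simp [hr, smul_eq_mul]
  have hr2 : r.2 = b'.2 - a'.2 + (N:ℤ) * q.2 := by simp [hr, smul_eq_mul]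
  have hN' : (2:ℤ) ≤ (N:ℤ) := by exact_mod_cast hN
  -- key case analysis: either q = δ (self-loop at δ) or r = q (self-loop at q)
  have key : q = δ ∨ r = q := by
    rw [Prod.ext_iff, Prod.ext_iff]
    exact key_arith (N:ℤ) hN' ha1 ha2 ha3 ha4 hb1 hb2 hb3 hb4 ha1' ha2' ha3' ha4'
      hb1' hb2' hb3' hb4' bδ1 bδ2 bδ3 bδ4 bq1 bq2 bq3 bq4 br1 br2 br3 br4
      hq1 hq2 hr1 hr2 hδ0
  have hGamAll : ∀ n, Gam N D n δ := by
    rcases key with h | h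
    · exact gam_selfloop hN hD ha hb (hq ▸ h)
    · have hqAll : ∀ n, Gam N D n q := gam_selfloop hN hD ha' hb' (hr ▸ h)
      intro n
      cases n with
      | zero => exact gam_zero bδ1 bδ2 bδ3 bδ4
      | succ n => exact gam_succ_intro hN ha hb (hqAll n)
  obtain ⟨v, hvFS, huFS⟩ := gam_inf hN hD hGamAll
  set u : Plane := v + emb δ with hu
  have hkey : u + emb d₁ = v + emb d₂ := by
    rw [hu, hδ, emb_sub]
    abel
  constructor
  · obtain ⟨e₁, he₁, q₁, hq₁, hdec₁⟩ := fs_decomp2 hN hD huFS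
    obtain ⟨e₂, he₂, q₂, hq₂, hdec₂⟩ := fs_decomp2 hN hD hvFS
    refine ⟨e₁, he₁, e₂, he₂, u + emb d₁, ⟨q₁, hq₁, ?_⟩, ⟨q₂, hq₂, ?_⟩⟩
    · simp only []
      rw [hdec₁]
    · simp only []
      rw [hdec₂, hkey]
  · exact ⟨u + emb d₁, ⟨u, huFS, rfl⟩, ⟨v, hvFS, hkey.symm⟩⟩
end
end

section
/- Let K = K(N,D) be a fractal square. For any distinct d, d' ∈ D, the sets K + d and K + d' intersect if and only if the sets K⁽²⁾ + d and K⁽²⁾ + d' intersect. -/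
open Set Metric Topology Pointwise Filter

noncomputable section

section Aux
variable (N : ℕ) (D : Finset (ℤ × ℤ))

lemma emb_zero (p : ℤ × ℤ) : emb p 0 = (p.1 : ℝ) := rfl
lemma emb_one (p : ℤ × ℤ) : emb p 1 = (p.2 : ℝ) := rfl

lemma approx_two : approx N D 2 =
    ⋃ e ∈ D, (fun x => (N : ℝ)⁻¹ • (x + emb e)) ''
      (⋃ f ∈ D, (fun x => (N : ℝ)⁻¹ • (x + emb f)) '' unitSq) := rfl

lemma bnd (n a : ℤ) (hn : 0 < n) (h : |n * a| ≤ n) : |a| ≤ 1 := by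
  rw [abs_mul, abs_of_pos hn] at h
  nlinarith [abs_nonneg a]

lemma coord (n v w e e' : ℤ) (hn : 2 ≤ n) (he0 : 0 ≤ e) (he1 : e ≤ n - 1)
    (he0' : 0 ≤ e') (he1' : e' ≤ n - 1) (hv : |v| ≤ 1) (hw : |w| ≤ 1)
    (heq : w = n * v + e' - e) :
    (v ≠ 0 → w = v) ∧ ((v = 0 → w = 0) ↔ e - e' = (n - 1) * w) := by
  obtain ⟨hv1, hv2⟩ := abs_le.mp hv; obtain ⟨hw1, hw2⟩ := abs_le.mp hw
  constructor
  · intro hv0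
    interval_cases v <;> interval_cases w <;> omega
  · constructor
    · intro h
      interval_cases v <;> interval_cases w <;> omega
    · intro h hv0
      subst hv0
      interval_cases w <;> omega

end Aux
section Aux2
variable {N : ℕ} {D : Finset (ℤ × ℤ)}

lemma approx_subset_unitSq (hN : 2 ≤ N) (hD : IsDigitSet N D) :
    ∀ n, approx N D n ⊆ unitSq := by
  intro n
  induction n with
  | zero => exact fun x hx => hx
  | succ n ih =>
    intro z hz
    simp only [approx, Set.mem_iUnion] at hz
    obtain ⟨g, hg, x, hx, rfl⟩ := hz
    obtain ⟨hx0, hx1⟩ := ih hx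
    obtain ⟨hg1, hg2, hg3, hg4⟩ := hD.2 g hg
    have hNpos : (0:ℝ) < N := by positivity
    have hg1' : (0:ℝ) ≤ g.1 := by exact_mod_cast hg1
    have hg2' : (g.1:ℝ) ≤ (N:ℝ) - 1 := by exact_mod_cast hg2
    have hg3' : (0:ℝ) ≤ g.2 := by exact_mod_cast hg3
    have hg4' : (g.2:ℝ) ≤ (N:ℝ) - 1 := by exact_mod_cast hg4
    constructor
    · show (N:ℝ)⁻¹ * (x 0 + emb g 0) ∈ Icc (0:ℝ) 1
      rw [emb_zero]
      simp only [Set.mem_Icc] at hx0 ⊢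
      exact ⟨mul_nonneg (by positivity) (by linarith [hx0.1]),
        by rw [inv_mul_le_iff₀ hNpos]; linarith [hx0.2]⟩
    · show (N:ℝ)⁻¹ * (x 1 + emb g 1) ∈ Icc (0:ℝ) 1
      rw [emb_one]
      simp only [Set.mem_Icc] at hx1 ⊢
      exact ⟨mul_nonneg (by positivity) (by linarith [hx1.1]),
        by rw [inv_mul_le_iff₀ hNpos]; linarith [hx1.2]⟩

lemma approx_antitone (hN : 2 ≤ N) (hD : IsDigitSet N D) :
    ∀ n, approx N D (n + 1) ⊆ approx N D n := by
  intro n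
  induction n with
  | zero => exact approx_subset_unitSq hN hD 1
  | succ n ih =>
    intro z hz
    simp only [approx, Set.mem_iUnion] at hz ⊢
    obtain ⟨g, hg, x, hx, rfl⟩ := hz
    exact ⟨g, hg, x, ih hx, rfl⟩

lemma mem_approx_of_mem_FS (hN : 2 ≤ N) (hD : IsDigitSet N D) {x : Plane}
    (hx : x ∈ FS N D) : ∀ n, x ∈ approx N D n := by
  intro n
  cases n with
  | zero => exact approx_subset_unitSq hN hD 1 (Set.mem_iInter.mp hx 0)
  | succ n => exact Set.mem_iInter.mp hx n

lemma mapD_mem_FS (hN : 2 ≤ N) (hD : IsDigitSet N D) {g : ℤ × ℤ} (hg : g ∈ D)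
    {x : Plane} (hx : x ∈ FS N D) : (N : ℝ)⁻¹ • (x + emb g) ∈ FS N D := by
  refine Set.mem_iInter.mpr fun n => ?_
  simp only [approx, Set.mem_iUnion]
  exact ⟨g, hg, x, mem_approx_of_mem_FS hN hD hx n, rfl⟩

lemma fp_mem_FS (hN : 2 ≤ N) (hD : IsDigitSet N D) {g : ℤ × ℤ} (hg : g ∈ D) :
    ((N:ℝ) - 1)⁻¹ • emb g ∈ FS N D := by
  have hN1 : (0:ℝ) < (N:ℝ) - 1 := by
    have : (2:ℝ) ≤ N := by exact_mod_cast hN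
    linarith
  have key : ∀ n, ((N:ℝ) - 1)⁻¹ • emb g ∈ approx N D n := by
    intro n
    induction n with
    | zero =>
      obtain ⟨hg1, hg2, hg3, hg4⟩ := hD.2 g hg
      have hg1' : (0:ℝ) ≤ g.1 := by exact_mod_cast hg1
      have hg2' : (g.1:ℝ) ≤ (N:ℝ) - 1 := by exact_mod_cast hg2
      have hg3' : (0:ℝ) ≤ g.2 := by exact_mod_cast hg3
      have hg4' : (g.2:ℝ) ≤ (N:ℝ) - 1 := by exact_mod_cast hg4
      constructor
      · show ((N:ℝ) - 1)⁻¹ * emb g 0 ∈ Icc (0:ℝ) 1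
        rw [emb_zero]
        exact ⟨by positivity, by rw [inv_mul_le_iff₀ hN1]; linarith⟩
      · show ((N:ℝ) - 1)⁻¹ * emb g 1 ∈ Icc (0:ℝ) 1
        rw [emb_one]
        exact ⟨by positivity, by rw [inv_mul_le_iff₀ hN1]; linarith⟩
    | succ n ih =>
      simp only [approx, Set.mem_iUnion]
      refine ⟨g, hg, _, ih, ?_⟩
      have hNpos : (0:ℝ) < N := by positivity
      show (N:ℝ)⁻¹ • (((N:ℝ) - 1)⁻¹ • emb g + emb g) = ((N:ℝ) - 1)⁻¹ • emb g
      rw [smul_add, smul_smul, ← add_smul]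
      congr 1
      field_simp
      ring
  exact Set.mem_iInter.mpr fun n => key (n + 1)

end Aux2
section Aux3
variable {N : ℕ} {D : Finset (ℤ × ℤ)}

/-- From a self-loop pair `(g, g')` with `g - g' = (N-1)•t`, produce two points of the
fractal whose difference is `emb t`. -/
lemma selfloop (hN : 2 ≤ N) (hD : IsDigitSet N D) {g g' : ℤ × ℤ} (hg : g ∈ D)
    (hg' : g' ∈ D) (t1 t2 : ℤ) (h1 : g.1 - g'.1 = ((N:ℤ) - 1) * t1)
    (h2 : g.2 - g'.2 = ((N:ℤ) - 1) * t2) :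
    ∃ a b, a ∈ FS N D ∧ b ∈ FS N D ∧ b 0 = a 0 + (t1:ℝ) ∧ b 1 = a 1 + (t2:ℝ) := by
  have hN1 : ((N:ℝ) - 1) ≠ 0 := by
    have : (2:ℝ) ≤ N := by exact_mod_cast hN
    linarith
  refine ⟨((N:ℝ) - 1)⁻¹ • emb g', ((N:ℝ) - 1)⁻¹ • emb g,
    fp_mem_FS hN hD hg', fp_mem_FS hN hD hg, ?_, ?_⟩
  · show ((N:ℝ) - 1)⁻¹ * emb g 0 = ((N:ℝ) - 1)⁻¹ * emb g' 0 + (t1:ℝ)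
    rw [emb_zero, emb_zero]
    have h1' : (g.1:ℝ) - (g'.1:ℝ) = ((N:ℝ) - 1) * (t1:ℝ) := by exact_mod_cast h1
    field_simp
    linarith
  · show ((N:ℝ) - 1)⁻¹ * emb g 1 = ((N:ℝ) - 1)⁻¹ * emb g' 1 + (t2:ℝ)
    rw [emb_one, emb_one]
    have h2' : (g.2:ℝ) - (g'.2:ℝ) = ((N:ℝ) - 1) * (t2:ℝ) := by exact_mod_cast h2
    field_simp
    linarith

/-- Pull a pair with difference `t` back along the edge `t' → t` realized by
digits `(g, g')`, obtaining a pair with difference `t'`. -/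
lemma pull (hN : 2 ≤ N) (hD : IsDigitSet N D) {g g' : ℤ × ℤ} (hg : g ∈ D)
    (hg' : g' ∈ D) (t1 t2 t1' t2' : ℤ)
    (h1 : t1 = (N:ℤ) * t1' + g'.1 - g.1) (h2 : t2 = (N:ℤ) * t2' + g'.2 - g.2)
    {a b : Plane} (ha : a ∈ FS N D) (hb : b ∈ FS N D)
    (e0 : b 0 = a 0 + (t1:ℝ)) (e1 : b 1 = a 1 + (t2:ℝ)) :
    ∃ a' b', a' ∈ FS N D ∧ b' ∈ FS N D ∧
      b' 0 = a' 0 + (t1':ℝ) ∧ b' 1 = a' 1 + (t2':ℝ) := by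
  have hNpos : (0:ℝ) < N := by positivity
  refine ⟨(N:ℝ)⁻¹ • (a + emb g'), (N:ℝ)⁻¹ • (b + emb g),
    mapD_mem_FS hN hD hg' ha, mapD_mem_FS hN hD hg hb, ?_, ?_⟩
  · show (N:ℝ)⁻¹ * (b 0 + emb g 0) = (N:ℝ)⁻¹ * (a 0 + emb g' 0) + (t1':ℝ)
    rw [emb_zero, emb_zero]
    have h1' : (t1:ℝ) = (N:ℝ) * (t1':ℝ) + (g'.1:ℝ) - (g.1:ℝ) := by exact_mod_cast h1
    field_simp
    linarith
  · show (N:ℝ)⁻¹ * (b 1 + emb g 1) = (N:ℝ)⁻¹ * (a 1 + emb g' 1) + (t2':ℝ)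
    rw [emb_one, emb_one]
    have h2' : (t2:ℝ) = (N:ℝ) * (t2':ℝ) + (g'.2:ℝ) - (g.2:ℝ) := by exact_mod_cast h2
    field_simp
    linarith

end Aux3
lemma combin (n v1 v2 w1 w2 u1 u2 e1 e1' e2 e2' f1 f1' f2 f2' : ℤ) (hn : 2 ≤ n)
    (hbe1 : 0 ≤ e1 ∧ e1 ≤ n - 1) (hbe1' : 0 ≤ e1' ∧ e1' ≤ n - 1)
    (hbe2 : 0 ≤ e2 ∧ e2 ≤ n - 1) (hbe2' : 0 ≤ e2' ∧ e2' ≤ n - 1)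
    (hbf1 : 0 ≤ f1 ∧ f1 ≤ n - 1) (hbf1' : 0 ≤ f1' ∧ f1' ≤ n - 1)
    (hbf2 : 0 ≤ f2 ∧ f2 ≤ n - 1) (hbf2' : 0 ≤ f2' ∧ f2' ≤ n - 1)
    (hw1 : w1 = n * v1 + e1' - e1) (hw2 : w2 = n * v2 + e2' - e2)
    (hu1 : u1 = n * w1 + f1' - f1) (hu2 : u2 = n * w2 + f2' - f2)
    (hu1b : |u1| ≤ 1) (hu2b : |u2| ≤ 1) (hvne : v1 ≠ 0 ∨ v2 ≠ 0) :
    (e1 - e1' = (n - 1) * w1 ∧ e2 - e2' = (n - 1) * w2) ∨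
      (f1 - f1' = (n - 1) * u1 ∧ f2 - f2' = (n - 1) * u2) := by
  have hnpos : (0:ℤ) < n := by omega
  have hw1b : |w1| ≤ 1 := by
    refine bnd n w1 hnpos ?_
    rw [show n * w1 = u1 - f1' + f1 by rw [hu1]; ring, abs_le]
    rw [abs_le] at hu1b; omega
  have hw2b : |w2| ≤ 1 := by
    refine bnd n w2 hnpos ?_
    rw [show n * w2 = u2 - f2' + f2 by rw [hu2]; ring, abs_le]
    rw [abs_le] at hu2b; omega
  have hv1b : |v1| ≤ 1 := by
    refine bnd n v1 hnpos ?_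
    rw [show n * v1 = w1 - e1' + e1 by rw [hw1]; ring, abs_le]
    rw [abs_le] at hw1b; omega
  have hv2b : |v2| ≤ 1 := by
    refine bnd n v2 hnpos ?_
    rw [show n * v2 = w2 - e2' + e2 by rw [hw2]; ring, abs_le]
    rw [abs_le] at hw2b; omega
  obtain ⟨Cvw1, Cew1⟩ := coord n v1 w1 e1 e1' hn hbe1.1 hbe1.2 hbe1'.1 hbe1'.2 hv1b hw1b hw1
  obtain ⟨Cvw2, Cew2⟩ := coord n v2 w2 e2 e2' hn hbe2.1 hbe2.2 hbe2'.1 hbe2'.2 hv2b hw2b hw2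
  obtain ⟨Cwu1, Cfu1⟩ := coord n w1 u1 f1 f1' hn hbf1.1 hbf1.2 hbf1'.1 hbf1'.2 hw1b hu1b hu1
  obtain ⟨Cwu2, Cfu2⟩ := coord n w2 u2 f2 f2' hn hbf2.1 hbf2.2 hbf2'.1 hbf2'.2 hw2b hu2b hu2
  by_cases hP : (v1 = 0 → w1 = 0) ∧ (v2 = 0 → w2 = 0)
  · exact Or.inl ⟨Cew1.mp hP.1, Cew2.mp hP.2⟩
  · have hcase : (v1 = 0 ∧ w1 ≠ 0) ∨ (v2 = 0 ∧ w2 ≠ 0) := by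
      rcases not_and_or.mp hP with h | h <;> push_neg at h
      · exact Or.inl h
      · exact Or.inr h
    have hQ1 : w1 = 0 → u1 = 0 := by
      intro h0
      rcases hcase with ⟨hv, hw⟩ | ⟨hv, hw⟩
      · exact absurd h0 hw
      · exfalso
        have hv10 : v1 = 0 := by
          by_contra hcon
          exact hcon ((Cvw1 hcon).symm.trans h0)
        exact hvne.elim (fun h => h hv10) (fun h => h hv)
    have hQ2 : w2 = 0 → u2 = 0 := by
      intro h0
      rcases hcase with ⟨hv, hw⟩ | ⟨hv, hw⟩
      · exfalso
        have hv20 : v2 = 0 := by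
          by_contra hcon
          exact hcon ((Cvw2 hcon).symm.trans h0)
        exact hvne.elim (fun h => h hv) (fun h => h hv20)
      · exact absurd h0 hw
    exact Or.inr ⟨Cfu1.mp hQ1, Cfu2.mp hQ2⟩

/-- For distinct `d, d' ∈ D`, the sets `K + d` and `K + d'` intersect iff
`K⁽²⁾ + d` and `K⁽²⁾ + d'` intersect. -/
theorem stmt3 (N : ℕ) (hN : 2 ≤ N) (D : Finset (ℤ × ℤ)) (hD : IsDigitSet N D)
    (d d' : ℤ × ℤ) (hd : d ∈ D) (hd' : d' ∈ D) (hne : d ≠ d') :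
    ((fun x => x + emb d) '' FS N D ∩
        (fun x => x + emb d') '' FS N D).Nonempty ↔
      ((fun x => x + emb d) '' approx N D 2 ∩
        (fun x => x + emb d') '' approx N D 2).Nonempty := by
  have hNR : (2:ℝ) ≤ (N:ℝ) := by exact_mod_cast hN
  have hN0 : (N:ℝ) ≠ 0 := by linarith
  constructor
  · rintro ⟨z, ⟨x, hx, hxe⟩, x', hx', hx'e⟩
    exact ⟨z, ⟨x, Set.mem_iInter.mp hx 1, hxe⟩, ⟨x', Set.mem_iInter.mp hx' 1, hx'e⟩⟩
  · rintro ⟨z, ⟨y, hy, hye⟩, y', hy', hy'e⟩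
    rw [approx_two] at hy hy'
    simp only [Set.mem_iUnion, Set.mem_image] at hy hy'
    obtain ⟨e, he, y1, ⟨f, hf, x, hx, rfl⟩, rfl⟩ := hy
    obtain ⟨e', he', y1', ⟨f', hf', x', hx', rfl⟩, rfl⟩ := hy'
    -- the master coordinate equations
    have E : ((N:ℝ)⁻¹ • ((N:ℝ)⁻¹ • (x + emb f) + emb e) + emb d : Plane)
        = (N:ℝ)⁻¹ • ((N:ℝ)⁻¹ • (x' + emb f') + emb e') + emb d' :=
      hye.trans hy'e.symm
    have E0 : (N:ℝ)⁻¹ * ((N:ℝ)⁻¹ * (x 0 + (f.1:ℝ)) + (e.1:ℝ)) + (d.1:ℝ)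
        = (N:ℝ)⁻¹ * ((N:ℝ)⁻¹ * (x' 0 + (f'.1:ℝ)) + (e'.1:ℝ)) + (d'.1:ℝ) :=
      congrArg (fun p : Plane => p 0) E
    have E1 : (N:ℝ)⁻¹ * ((N:ℝ)⁻¹ * (x 1 + (f.2:ℝ)) + (e.2:ℝ)) + (d.2:ℝ)
        = (N:ℝ)⁻¹ * ((N:ℝ)⁻¹ * (x' 1 + (f'.2:ℝ)) + (e'.2:ℝ)) + (d'.2:ℝ) :=
      congrArg (fun p : Plane => p 1) E
    clear E hye hy'e
    -- integer offsets
    obtain ⟨v1, hv1def⟩ : ∃ t : ℤ, t = d'.1 - d.1 := ⟨_, rfl⟩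
    obtain ⟨v2, hv2def⟩ : ∃ t : ℤ, t = d'.2 - d.2 := ⟨_, rfl⟩
    obtain ⟨w1, hw1def⟩ : ∃ t : ℤ, t = (N:ℤ) * v1 + e'.1 - e.1 := ⟨_, rfl⟩
    obtain ⟨w2, hw2def⟩ : ∃ t : ℤ, t = (N:ℤ) * v2 + e'.2 - e.2 := ⟨_, rfl⟩
    obtain ⟨u1, hu1def⟩ : ∃ t : ℤ, t = (N:ℤ) * w1 + f'.1 - f.1 := ⟨_, rfl⟩
    obtain ⟨u2, hu2def⟩ : ∃ t : ℤ, t = (N:ℤ) * w2 + f'.2 - f.2 := ⟨_, rfl⟩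
    field_simp at E0 E1
    have hxe0 : x 0 - x' 0 = (u1:ℝ) := by
      rw [hu1def, hw1def, hv1def]; push_cast; linear_combination E0
    have hxe1 : x 1 - x' 1 = (u2:ℝ) := by
      rw [hu2def, hw2def, hv2def]; push_cast; linear_combination E1
    obtain ⟨hx0, hx1⟩ := hx
    obtain ⟨hx'0, hx'1⟩ := hx'
    simp only [Set.mem_Icc] at hx0 hx1 hx'0 hx'1
    have hu1b : |u1| ≤ 1 := by
      have h1 : (-1:ℝ) ≤ (u1:ℝ) := by linarith
      have h2 : (u1:ℝ) ≤ 1 := by linarith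
      rw [abs_le]; exact ⟨by exact_mod_cast h1, by exact_mod_cast h2⟩
    have hu2b : |u2| ≤ 1 := by
      have h1 : (-1:ℝ) ≤ (u2:ℝ) := by linarith
      have h2 : (u2:ℝ) ≤ 1 := by linarith
      rw [abs_le]; exact ⟨by exact_mod_cast h1, by exact_mod_cast h2⟩
    have hNZ : (2:ℤ) ≤ (N:ℤ) := by exact_mod_cast hN
    obtain ⟨he1, he2, he3, he4⟩ := hD.2 e he
    obtain ⟨he1', he2', he3', he4'⟩ := hD.2 e' he'
    obtain ⟨hf1, hf2, hf3, hf4⟩ := hD.2 f hf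
    obtain ⟨hf1', hf2', hf3', hf4'⟩ := hD.2 f' hf'
    have hvne : v1 ≠ 0 ∨ v2 ≠ 0 := by
      by_contra h
      push_neg at h
      refine hne (Prod.ext ?_ ?_) <;> omega
    have main : ∃ a b, a ∈ FS N D ∧ b ∈ FS N D ∧
        b 0 = a 0 + (v1:ℝ) ∧ b 1 = a 1 + (v2:ℝ) := by
      rcases combin (N:ℤ) v1 v2 w1 w2 u1 u2 e.1 e'.1 e.2 e'.2 f.1 f'.1 f.2 f'.2 hNZ
          ⟨he1, he2⟩ ⟨he1', he2'⟩ ⟨he3, he4⟩ ⟨he3', he4'⟩ ⟨hf1, hf2⟩ ⟨hf1', hf2'⟩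
          ⟨hf3, hf4⟩ ⟨hf3', hf4'⟩ hw1def hw2def hu1def hu2def hu1b hu2b hvne with
        ⟨P1, P2⟩ | ⟨Q1, Q2⟩
      · obtain ⟨a, b, ha, hb, hb0, hb1⟩ := selfloop hN hD he he' w1 w2 P1 P2
        exact pull hN hD he he' w1 w2 v1 v2 hw1def hw2def ha hb hb0 hb1
      · obtain ⟨a, b, ha, hb, hb0, hb1⟩ := selfloop hN hD hf hf' u1 u2 Q1 Q2
        obtain ⟨a', b', ha', hb', hb0', hb1'⟩ :=
          pull hN hD hf hf' u1 u2 w1 w2 hu1def hu2def ha hb hb0 hb1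
        exact pull hN hD he he' w1 w2 v1 v2 hw1def hw2def ha' hb' hb0' hb1'
    obtain ⟨a, b, ha, hb, hb0, hb1⟩ := main
    refine ⟨b + emb d, ⟨b, hb, rfl⟩, ⟨a, ha, ?_⟩⟩
    show a + emb d' = b + emb d
    ext i
    fin_cases i
    · show a 0 + emb d' 0 = b 0 + emb d 0
      rw [emb_zero, emb_zero, hb0, hv1def]
      push_cast
      ring
    · show a 1 + emb d' 1 = b 1 + emb d 1
      rw [emb_one, emb_one, hb1, hv2def]
      push_cast
      ring
end
end

section
/- Let K = K(N,D) be a fractal square with D ≠ {0,1,…,N−1}². If every loop in K⁽¹⁾ is null-homotopic in K⁽¹⁾, then K does not contain the topological boundary ∂[0,1]² of the unit square. -/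
open Set Metric Topology Pointwise Filter

noncomputable section

/-- `X` has trivial fundamental group: every loop in `X` is null-homotopic. -/
def TrivialPi1 (X : Type) [TopologicalSpace X] : Prop :=
  ∀ (x : X) (γ : Path x x), Path.Homotopic γ (Path.refl x)


section AuxWind
open Complex


/-- clamp to [0,1] -/
def clmp (t : ℝ) : ℝ := min (max t 0) 1

lemma clmp_mem (t : ℝ) : clmp t ∈ Icc (0:ℝ) 1 :=
  ⟨le_min (le_max_right _ _) zero_le_one, min_le_right _ _⟩

lemma clmp_of_mem {t : ℝ} (h : t ∈ Icc (0:ℝ) 1) : clmp t = t := by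
  simp [clmp, max_eq_left h.1, min_eq_left h.2]

lemma clmp_idem (t : ℝ) : clmp (clmp t) = clmp t := clmp_of_mem (clmp_mem t)

lemma clmp_mono : Monotone clmp := fun a b h =>
  min_le_min (max_le_max h le_rfl) le_rfl

lemma clmp_lip {a b : ℝ} (h : a ≤ b) : clmp b - clmp a ≤ b - a := by
  unfold clmp
  have h1 : max b 0 ≤ max a 0 + (b - a) :=
    max_le (by linarith [le_max_left a 0]) (by linarith [le_max_right a 0])
  have h2 : min (max b 0) 1 ≤ min (max a 0 + (b - a)) (1 + (b - a)) :=
    min_le_min h1 (by linarith)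
  rw [min_add_add_right] at h2
  linarith

lemma clmp_lipschitz (s t : ℝ) : |clmp s - clmp t| ≤ |s - t| := by
  rcases le_total s t with h | h
  · rw [abs_sub_comm, _root_.abs_of_nonneg (sub_nonneg.2 (clmp_mono h)), abs_sub_comm s t,
      _root_.abs_of_nonneg (sub_nonneg.2 h)]
    exact clmp_lip h
  · rw [_root_.abs_of_nonneg (sub_nonneg.2 (clmp_mono h)), _root_.abs_of_nonneg (sub_nonneg.2 h)]
    exact clmp_lip h

lemma clmp_continuous : Continuous clmp :=
  (continuous_id.max continuous_const).min continuous_const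

lemma ratio_slit {a b : ℂ} (h : ‖a - b‖ < ‖b‖) : a / b ∈ slitPlane := by
  have hb : b ≠ 0 := by
    intro hb; rw [hb] at h; simp at h; exact absurd h (by simp [not_lt])
  have h1 : ‖a / b - 1‖ < 1 := by
    rw [show a / b - 1 = (a - b) / b by field_simp]
    rw [norm_div, div_lt_one (by simpa [norm_pos_iff] using hb)]
    exact h
  simpa using mem_slitPlane_of_norm_lt_one (z := a / b - 1) h1

lemma telescope (f : ℕ → ℂ) (hf : ∀ j, f j ≠ 0) :
    ∀ n, ∏ j ∈ Finset.range n, f (j+1) / f j = f n / f 0 := by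
  intro n
  induction n with
  | zero => simp [div_self (hf 0)]
  | succ n ih =>
      rw [Finset.prod_range_succ, ih, div_mul_div_comm, mul_comm (f n),
        mul_div_mul_right _ _ (hf n)]

/-- winding data: `γ` on `[0,1]` has a continuous logarithm `L` with increment `c`. -/
def Wnd (γ : ℝ → ℂ) (c : ℂ) : Prop :=
  ∃ L : ℝ → ℂ, ContinuousOn L (Icc 0 1) ∧ (∀ t ∈ Icc (0:ℝ) 1, Complex.exp (L t) = γ t)
    ∧ L 1 - L 0 = c

lemma wnd_congr {γ γ' : ℝ → ℂ} (h : ∀ t ∈ Icc (0:ℝ) 1, γ t = γ' t) {c : ℂ}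
    (hw : Wnd γ c) : Wnd γ' c := by
  obtain ⟨L, hc, he, hv⟩ := hw
  exact ⟨L, hc, fun t ht => (he t ht).trans (h t ht), hv⟩

lemma int_const {h : ℝ → ℝ} (hc : ContinuousOn h (Icc 0 1))
    (hint : ∀ t ∈ Icc (0:ℝ) 1, ∃ k : ℤ, h t = k) : h 0 = h 1 := by
  by_contra hne
  have h0m : (0:ℝ) ∈ Icc (0:ℝ) 1 := left_mem_Icc.2 zero_le_one
  have h1m : (1:ℝ) ∈ Icc (0:ℝ) 1 := right_mem_Icc.2 zero_le_one
  obtain ⟨k₀, hk₀⟩ := hint 0 h0m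
  obtain ⟨k₁, hk₁⟩ := hint 1 h1m
  rcases lt_or_gt_of_ne hne with hlt | hgt
  · have hk : k₀ < k₁ := by exact_mod_cast hk₀ ▸ hk₁ ▸ hlt
    have hkk : (k₀:ℝ) + 1 ≤ k₁ := by exact_mod_cast hk
    have hmem : (k₀:ℝ) + 1/2 ∈ Icc (h 0) (h 1) := by
      rw [hk₀, hk₁]; constructor <;> push_cast <;> linarith
    obtain ⟨t, ht, hht⟩ := intermediate_value_Icc zero_le_one hc hmem
    obtain ⟨k, hk'⟩ := hint t ht
    rw [hk'] at hht
    have : (2*k : ℝ) = 2*k₀ + 1 := by linarith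
    have : (2*k : ℤ) = 2*k₀ + 1 := by exact_mod_cast this
    omega
  · have hk : k₁ < k₀ := by exact_mod_cast hk₁ ▸ hk₀ ▸ hgt
    have hkk : (k₁:ℝ) + 1 ≤ k₀ := by exact_mod_cast hk
    have hmem : (k₁:ℝ) + 1/2 ∈ Icc (h 1) (h 0) := by
      rw [hk₀, hk₁]; constructor <;> push_cast <;> linarith
    obtain ⟨t, ht, hht⟩ := intermediate_value_Icc' zero_le_one hc hmem
    obtain ⟨k, hk'⟩ := hint t ht
    rw [hk'] at hht
    have : (2*k : ℝ) = 2*k₁ + 1 := by linarith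
    have : (2*k : ℤ) = 2*k₁ + 1 := by exact_mod_cast this
    omega

lemma wnd_unique {γ : ℝ → ℂ} {c c' : ℂ} (h : Wnd γ c) (h' : Wnd γ c') : c = c' := by
  obtain ⟨L, hLc, hLe, hLv⟩ := h
  obtain ⟨M, hMc, hMe, hMv⟩ := h'
  have h0m : (0:ℝ) ∈ Icc (0:ℝ) 1 := left_mem_Icc.2 zero_le_one
  have h1m : (1:ℝ) ∈ Icc (0:ℝ) 1 := right_mem_Icc.2 zero_le_one
  have hπ : (0:ℝ) < 2 * Real.pi := by positivity
  have key : ∀ t ∈ Icc (0:ℝ) 1, ∃ k : ℤ, L t - M t = k * (2 * Real.pi * I) := by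
    intro t ht
    have hγ : γ t ≠ 0 := (hLe t ht) ▸ Complex.exp_ne_zero _
    have : Complex.exp (L t - M t) = 1 := by
      rw [Complex.exp_sub, hLe t ht, hMe t ht, div_self hγ]
    exact Complex.exp_eq_one_iff.1 this
  set h : ℝ → ℝ := fun t => (L t - M t).im / (2 * Real.pi) with hh
  have hcc : ContinuousOn h (Icc 0 1) :=
    (Complex.continuous_im.comp_continuousOn (hLc.sub hMc)).div_const _
  have hint : ∀ t ∈ Icc (0:ℝ) 1, ∃ k : ℤ, h t = k := by
    intro t ht
    obtain ⟨k, hk⟩ := key t ht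
    refine ⟨k, ?_⟩
    rw [hh]
    simp only [hk]
    have : ((k:ℂ) * (2 * Real.pi * I)).im = (k:ℝ) * (2 * Real.pi) := by simp
    rw [this]
    field_simp
  have h01 := int_const hcc hint
  obtain ⟨k₀, hk₀⟩ := key 0 h0m
  obtain ⟨k₁, hk₁⟩ := key 1 h1m
  have him0 : h 0 = k₀ := by
    rw [hh]; simp only [hk₀]
    have : ((k₀:ℂ) * (2 * Real.pi * I)).im = (k₀:ℝ) * (2 * Real.pi) := by simp
    rw [this]; field_simp
  have him1 : h 1 = k₁ := by
    rw [hh]; simp only [hk₁]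
    have : ((k₁:ℂ) * (2 * Real.pi * I)).im = (k₁:ℝ) * (2 * Real.pi) := by simp
    rw [this]; field_simp
  have hkk : (k₀ : ℝ) = (k₁ : ℝ) := by rw [← him0, ← him1, h01]
  have : k₀ = k₁ := by exact_mod_cast hkk
  have hsub : L 1 - M 1 = L 0 - M 0 := by rw [hk₀, hk₁, this]
  rw [← hLv, ← hMv]
  linear_combination hsub

lemma wnd_exists {γ : ℝ → ℂ} (hγ : ContinuousOn γ (Icc 0 1))
    (h0 : ∀ t ∈ Icc (0:ℝ) 1, γ t ≠ 0) : ∃ c, Wnd γ c := by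
  set g : ℝ → ℂ := fun t => γ (clmp t) with hg
  have hgc : Continuous g := hγ.comp_continuous clmp_continuous clmp_mem
  have hg0 : ∀ t, g t ≠ 0 := fun t => h0 _ (clmp_mem t)
  -- minimum of ‖γ‖ on [0,1]
  obtain ⟨t₀, ht₀, hmin'⟩ := isCompact_Icc.exists_isMinOn (⟨0, left_mem_Icc.2 zero_le_one⟩)
    (hγ.norm)
  have hmin : ∀ y ∈ Icc (0:ℝ) 1, ‖γ t₀‖ ≤ ‖γ y‖ := fun y hy => hmin' hy
  set ε : ℝ := ‖γ t₀‖ with hε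
  have hεpos : 0 < ε := by simpa [hε, norm_pos_iff] using h0 t₀ ht₀
  have hglb : ∀ t, ε ≤ ‖g t‖ := fun t => hmin _ (clmp_mem t)
  -- uniform continuity
  obtain ⟨δ, hδpos, hUC⟩ := Metric.uniformContinuousOn_iff.1
    (isCompact_Icc.uniformContinuousOn_of_continuous hγ) ε hεpos
  obtain ⟨n, hn⟩ := exists_nat_one_div_lt hδpos
  set m : ℕ := n + 1 with hm
  have hmpos : (0:ℝ) < m := by positivity
  have hclose : ∀ s t : ℝ, |s - t| ≤ 1 / m → ‖g s - g t‖ < ε := by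
    intro s t hst
    have h1 : dist (clmp s) (clmp t) < δ := by
      rw [Real.dist_eq]
      calc |clmp s - clmp t| ≤ |s - t| := clmp_lipschitz s t
        _ ≤ 1 / m := hst
        _ < δ := by exact_mod_cast hn
    have := hUC _ (clmp_mem s) _ (clmp_mem t) h1
    rwa [dist_eq_norm] at this
  -- grid points
  set x : ℕ → ℝ → ℝ := fun j t => min (max t 0) (j / m) with hx
  have hx0 : ∀ t, x 0 t = 0 := by
    intro t; simp [hx, min_eq_right (le_max_right t 0)]
  have hxm : ∀ t, x m t = clmp t := by
    intro t; simp [hx, clmp, div_self (ne_of_gt hmpos)]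
  have hxd : ∀ j t, |x (j+1) t - x j t| ≤ 1 / m := by
    intro j t
    have h1 : x j t ≤ x (j+1) t := by
      apply min_le_min le_rfl
      apply div_le_div_of_nonneg_right (by push_cast; linarith) hmpos.le
    have h2 : x (j+1) t ≤ x j t + 1 / m := by
      have e : ((j+1:ℕ):ℝ) / (m:ℝ) = (j:ℝ)/m + 1/m := by push_cast; ring
      show min (max t 0) (((j+1:ℕ):ℝ)/m) ≤ min (max t 0) ((j:ℝ)/m) + 1/m
      rw [e]
      calc min (max t 0) ((j:ℝ)/m + 1/m)
          ≤ min (max t 0 + 1/m) ((j:ℝ)/m + 1/m) :=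
            min_le_min (by linarith [show (0:ℝ) < 1/m by positivity]) le_rfl
        _ = min (max t 0) ((j:ℝ)/m) + 1/m := min_add_add_right _ _ _
    rw [abs_le]; constructor <;> linarith
  have hxc : ∀ j, Continuous fun t => x j t := fun j =>
    (continuous_id.max continuous_const).min continuous_const
  -- the lift
  set L : ℝ → ℂ := fun t => Complex.log (g 0) +
    ∑ j ∈ Finset.range m, Complex.log (g (x (j+1) t) / g (x j t)) with hL
  have hratio : ∀ j t, g (x (j+1) t) / g (x j t) ∈ slitPlane := by
    intro j t
    apply ratio_slit
    exact lt_of_lt_of_le (hclose _ _ (hxd j t)) (hglb _)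
  have hLc : Continuous L := by
    apply continuous_const.add
    apply continuous_finset_sum
    intro j _
    rw [continuous_iff_continuousAt]
    intro t
    exact ContinuousAt.clog (((hgc.comp (hxc (j+1))).div (hgc.comp (hxc j))
      (fun t => hg0 _)).continuousAt) (hratio j t)
  refine ⟨L 1 - L 0, L, hLc.continuousOn, ?_, rfl⟩
  intro t ht
  rw [hL]
  simp only
  rw [Complex.exp_add, Complex.exp_sum]
  have : ∀ j ∈ Finset.range m, Complex.exp (Complex.log (g (x (j+1) t) / g (x j t)))
      = g (x (j+1) t) / g (x j t) := by
    intro j _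
    exact Complex.exp_log (div_ne_zero (hg0 _) (hg0 _))
  rw [Finset.prod_congr rfl this, telescope (fun j => g (x j t)) (fun j => hg0 _) m,
    Complex.exp_log (hg0 0), hxm, hx0]
  rw [show g (clmp t) = γ t from by show γ (clmp (clmp t)) = γ t; rw [clmp_idem, clmp_of_mem ht],
    show g 0 = γ 0 from by show γ (clmp 0) = γ 0; rw [clmp_of_mem (left_mem_Icc.2 zero_le_one)]]
  have hγ0 : γ 0 ≠ 0 := h0 0 (left_mem_Icc.2 zero_le_one)
  field_simp

lemma wnd_perturb {γ γ' : ℝ → ℂ} {c : ℂ}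
    (hγ : ContinuousOn γ (Icc 0 1)) (hγ' : ContinuousOn γ' (Icc 0 1))
    (hclose : ∀ t ∈ Icc (0:ℝ) 1, ‖γ' t - γ t‖ < ‖γ t‖)
    (hloop : γ 0 = γ 1) (hloop' : γ' 0 = γ' 1)
    (h : Wnd γ c) : Wnd γ' c := by
  obtain ⟨L, hLc, hLe, hLv⟩ := h
  have hγ0 : ∀ t ∈ Icc (0:ℝ) 1, γ t ≠ 0 := fun t ht =>
    norm_pos_iff.1 (lt_of_le_of_lt (norm_nonneg _) (hclose t ht))
  set M : ℝ → ℂ := fun t => L t + Complex.log (γ' t / γ t) with hM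
  have hslit : ∀ t ∈ Icc (0:ℝ) 1, γ' t / γ t ∈ slitPlane := fun t ht =>
    ratio_slit (hclose t ht)
  have hMc : ContinuousOn M (Icc 0 1) :=
    hLc.add ((hγ'.div hγ hγ0).clog hslit)
  refine ⟨M, hMc, ?_, ?_⟩
  · intro t ht
    rw [hM]
    simp only
    have hγ'0 : γ' t ≠ 0 := by
      intro hz
      have := hclose t ht
      rw [hz, zero_sub, norm_neg] at this
      exact lt_irrefl _ this
    rw [Complex.exp_add, hLe t ht, Complex.exp_log (div_ne_zero hγ'0 (hγ0 t ht))]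
    rw [mul_comm]
    exact div_mul_cancel₀ _ (hγ0 t ht)
  · rw [hM]
    simp only
    rw [← hloop, ← hloop']
    linear_combination hLv

lemma wnd_homotopy {H : ℝ → ℝ → ℂ}
    (hc : Continuous fun st : ℝ × ℝ => H st.1 st.2)
    (h0 : ∀ s t, H s t ≠ 0)
    (hloop : ∀ s, H s 0 = H s 1)
    (hcl : ∀ s t, H s t = H (clmp s) (clmp t))
    {c : ℂ} (hw : Wnd (H 0) c) : Wnd (H 1) c := by
  have hKc : IsCompact ((Icc (0:ℝ) 1) ×ˢ (Icc (0:ℝ) 1)) := isCompact_Icc.prod isCompact_Icc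
  have hKne : ((Icc (0:ℝ) 1) ×ˢ (Icc (0:ℝ) 1)).Nonempty :=
    ⟨(0,0), by constructor <;> exact left_mem_Icc.2 zero_le_one⟩
  obtain ⟨⟨s₀, t₀⟩, hst₀, hmin'⟩ := hKc.exists_isMinOn hKne (hc.norm.continuousOn)
  have hmin : ∀ y ∈ (Icc (0:ℝ) 1) ×ˢ (Icc (0:ℝ) 1), ‖H s₀ t₀‖ ≤ ‖H y.1 y.2‖ :=
    fun y hy => hmin' hy
  set ε : ℝ := ‖H s₀ t₀‖ with hε
  have hεpos : 0 < ε := by simpa [hε, norm_pos_iff] using h0 s₀ t₀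
  have hglb : ∀ s t, ε ≤ ‖H s t‖ := by
    intro s t
    rw [hcl s t]
    exact hmin (clmp s, clmp t) ⟨clmp_mem s, clmp_mem t⟩
  obtain ⟨δ, hδpos, hUC⟩ := Metric.uniformContinuousOn_iff.1
    (hKc.uniformContinuousOn_of_continuous hc.continuousOn) ε hεpos
  obtain ⟨n, hn⟩ := exists_nat_one_div_lt hδpos
  set m : ℕ := n + 1 with hm
  have hmpos : (0:ℝ) < m := by positivity
  have hsl : ∀ a, ContinuousOn (H a) (Icc 0 1) := by
    intro a
    have : Continuous (H a) := hc.comp (continuous_const.prodMk continuous_id)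
    exact this.continuousOn
  have step : ∀ a b : ℝ, |a - b| ≤ 1 / m → ∀ c', Wnd (H a) c' → Wnd (H b) c' := by
    intro a b hab c' hwa
    apply wnd_perturb (hsl a) (hsl b) _ (hloop a) (hloop b) hwa
    intro t ht
    have h1 : dist ((clmp b, clmp t) : ℝ × ℝ) ((clmp a, clmp t) : ℝ × ℝ) < δ := by
      rw [Prod.dist_eq]
      simp only [dist_self]
      rw [max_eq_left dist_nonneg, Real.dist_eq]
      calc |clmp b - clmp a| ≤ |b - a| := clmp_lipschitz b a
        _ = |a - b| := abs_sub_comm b a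
        _ ≤ 1 / m := hab
        _ < δ := by exact_mod_cast hn
    have h2 := hUC _ ⟨clmp_mem b, clmp_mem t⟩ _ ⟨clmp_mem a, clmp_mem t⟩ h1
    simp only at h2
    rw [dist_eq_norm] at h2
    calc ‖H b t - H a t‖ = ‖H (clmp b) (clmp t) - H (clmp a) (clmp t)‖ := by
          rw [← hcl, ← hcl]
      _ < ε := h2
      _ ≤ ‖H a t‖ := hglb a t
  have claim : ∀ k : ℕ, k ≤ m → Wnd (H ((k:ℝ) / m)) c := by
    intro k hk
    induction k with
    | zero => simpa using hw
    | succ k ih =>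
        apply step ((k:ℝ)/m) _ _ c (ih (by omega))
        rw [show (k:ℝ)/m - ((k+1:ℕ):ℝ)/m = -(1/m) by push_cast; ring, abs_neg,
          abs_of_pos (by positivity)]
  have := claim m le_rfl
  rwa [div_self (ne_of_gt hmpos)] at this

end AuxWind

section AuxGeom
open Complex

def toC (x : Plane) : ℂ := (x 0 : ℂ) + (x 1 : ℂ) * I

lemma cont_coord (i : Fin 2) : Continuous fun x : Plane => x i :=
  (EuclideanSpace.proj i).continuous

lemma toC_continuous : Continuous toC :=
  (Complex.continuous_ofReal.comp (cont_coord 0)).add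
    ((Complex.continuous_ofReal.comp (cont_coord 1)).mul continuous_const)

lemma toC_inj {a b : Plane} (h : toC a = toC b) : a = b := by
  have h0 := congrArg Complex.re h
  have h1 := congrArg Complex.im h
  simp [toC] at h0 h1
  ext i
  fin_cases i <;> assumption

def Epl (i : Fin 2) : Plane := EuclideanSpace.single i (1:ℝ)

lemma pt0 (a b : ℝ) : (a • Epl 0 + b • Epl 1 : Plane) 0 = a := by
  simp [Epl, PiLp.add_apply, PiLp.smul_apply, EuclideanSpace.single_apply]

lemma pt1 (a b : ℝ) : (a • Epl 0 + b • Epl 1 : Plane) 1 = b := by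
  simp [Epl, PiLp.add_apply, PiLp.smul_apply, EuclideanSpace.single_apply]

lemma unitSq_closed : IsClosed unitSq := by
  have h : unitSq = (fun x : Plane => x 0) ⁻¹' Icc 0 1 ∩ (fun x : Plane => x 1) ⁻¹' Icc 0 1 := rfl
  rw [h]
  exact (isClosed_Icc.preimage (cont_coord 0)).inter (isClosed_Icc.preimage (cont_coord 1))

lemma proj_openMap (i : Fin 2) : IsOpenMap fun x : Plane => x i := by
  have hs : Function.Surjective (EuclideanSpace.proj (𝕜 := ℝ) i) := by
    intro c
    exact ⟨WithLp.toLp 2 (fun _ => c), rfl⟩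
  exact (EuclideanSpace.proj (𝕜 := ℝ) i).isOpenMap hs

lemma interior_unitSq :
    interior unitSq = {x : Plane | x 0 ∈ Ioo (0:ℝ) 1 ∧ x 1 ∈ Ioo (0:ℝ) 1} := by
  have h : unitSq = (fun x : Plane => x 0) ⁻¹' Icc 0 1 ∩ (fun x : Plane => x 1) ⁻¹' Icc 0 1 := rfl
  rw [h, interior_inter,
    ← (proj_openMap 0).preimage_interior_eq_interior_preimage (cont_coord 0),
    ← (proj_openMap 1).preimage_interior_eq_interior_preimage (cont_coord 1),
    interior_Icc]
  rfl

noncomputable def θf (t : ℝ) : ℝ := 2 * Real.pi * t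
noncomputable def cof (t : ℝ) : ℝ := Real.cos (θf t)
noncomputable def sif (t : ℝ) : ℝ := Real.sin (θf t)
noncomputable def mf (t : ℝ) : ℝ := max |cof t| |sif t|

lemma mf_pos (t : ℝ) : 0 < mf t := by
  have h := Real.sin_sq_add_cos_sq (θf t)
  by_contra hle
  push_neg at hle
  have h1 : |cof t| ≤ 0 := le_trans (le_max_left _ _) hle
  have h2 : |sif t| ≤ 0 := le_trans (le_max_right _ _) hle
  have hc : cof t = 0 := abs_eq_zero.1 (le_antisymm h1 (abs_nonneg _))
  have hs : sif t = 0 := abs_eq_zero.1 (le_antisymm h2 (abs_nonneg _))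
  unfold cof at hc
  unfold sif at hs
  rw [hc, hs] at h
  norm_num at h

noncomputable def uf (t : ℝ) : Plane :=
  (1/2 + cof t / (2 * mf t)) • Epl 0 + (1/2 + sif t / (2 * mf t)) • Epl 1

lemma cof_cont : Continuous cof := by unfold cof θf; continuity
lemma sif_cont : Continuous sif := by unfold sif θf; continuity
lemma mf_cont : Continuous mf := cof_cont.abs.max sif_cont.abs

lemma mf_ne (t : ℝ) : 2 * mf t ≠ 0 := ne_of_gt (by linarith [mf_pos t])

lemma uf_cont : Continuous uf := by
  unfold uf
  apply Continuous.add <;> apply Continuous.fun_smul _ continuous_const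
  · exact continuous_const.add (cof_cont.div (continuous_const.mul mf_cont) mf_ne)
  · exact continuous_const.add (sif_cont.div (continuous_const.mul mf_cont) mf_ne)

lemma uf0 (t : ℝ) : uf t 0 = 1/2 + cof t / (2 * mf t) := pt0 _ _
lemma uf1 (t : ℝ) : uf t 1 = 1/2 + sif t / (2 * mf t) := pt1 _ _

lemma uf_mem_frontier (t : ℝ) : uf t ∈ frontier unitSq := by
  rw [unitSq_closed.frontier_eq]
  have hmpos := mf_pos t
  have hco : |cof t / (2 * mf t)| ≤ 1/2 := by
    rw [abs_div, _root_.abs_of_pos (show (0:ℝ) < 2 * mf t by linarith), div_le_iff₀ (by linarith)]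
    calc |cof t| ≤ mf t := le_max_left _ _
      _ = 1/2 * (2 * mf t) := by ring
  have hsi : |sif t / (2 * mf t)| ≤ 1/2 := by
    rw [abs_div, _root_.abs_of_pos (show (0:ℝ) < 2 * mf t by linarith), div_le_iff₀ (by linarith)]
    calc |sif t| ≤ mf t := le_max_right _ _
      _ = 1/2 * (2 * mf t) := by ring
  have hco' := abs_le.1 hco
  have hsi' := abs_le.1 hsi
  refine ⟨⟨?_, ?_⟩, ?_⟩
  · rw [uf0]; constructor <;> [linarith [hco'.1]; linarith [hco'.2]]
  · rw [uf1]; constructor <;> [linarith [hsi'.1]; linarith [hsi'.2]]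
  · rw [interior_unitSq]
    rintro ⟨h0, h1⟩
    rw [uf0] at h0
    rw [uf1] at h1
    rcases max_choice |cof t| |sif t| with hm | hm
    · have hmf : mf t = |cof t| := hm
      rcases abs_cases (cof t) with ⟨he, _⟩ | ⟨he, _⟩
      · have : cof t / (2 * mf t) = 1/2 := by
          rw [hmf, he, div_eq_iff (by rw [← he, ← hmf]; exact mf_ne t)]
          ring
        rw [this] at h0
        norm_num at h0
      · have : cof t / (2 * mf t) = -(1/2) := by
          rw [hmf, he, div_eq_iff (by rw [← he, ← hmf]; exact mf_ne t)]
          ring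
        rw [this] at h0
        norm_num at h0
    · have hmf : mf t = |sif t| := hm
      rcases abs_cases (sif t) with ⟨he, _⟩ | ⟨he, _⟩
      · have : sif t / (2 * mf t) = 1/2 := by
          rw [hmf, he, div_eq_iff (by rw [← he, ← hmf]; exact mf_ne t)]
          ring
        rw [this] at h1
        norm_num at h1
      · have : sif t / (2 * mf t) = -(1/2) := by
          rw [hmf, he, div_eq_iff (by rw [← he, ← hmf]; exact mf_ne t)]
          ring
        rw [this] at h1
        norm_num at h1

lemma cof01 : cof 0 = cof 1 := by
  unfold cof θf
  rw [mul_one, mul_zero, Real.cos_two_pi, Real.cos_zero]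

lemma sif01 : sif 0 = sif 1 := by
  unfold sif θf
  rw [mul_one, mul_zero, Real.sin_two_pi, Real.sin_zero]

lemma mf01 : mf 0 = mf 1 := by unfold mf; rw [cof01, sif01]

lemma uf01 : uf 0 = uf 1 := by unfold uf; rw [cof01, sif01, mf01]

noncomputable def zpt (a b s : ℝ) : Plane :=
  ((1-s) * (1/2) + s * a) • Epl 0 + ((1-s) * (1/2) + s * b) • Epl 1

lemma zpt0 (a b s : ℝ) : zpt a b s 0 = (1-s) * (1/2) + s * a := pt0 _ _
lemma zpt1 (a b s : ℝ) : zpt a b s 1 = (1-s) * (1/2) + s * b := pt1 _ _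

lemma zpt_cont (a b : ℝ) : Continuous (zpt a b) := by
  unfold zpt
  apply Continuous.add <;> exact Continuous.fun_smul (by fun_prop) continuous_const

lemma exp_polar (r θ : ℝ) (hr : 0 < r) :
    Complex.exp ((Real.log r : ℂ) + (θ:ℂ) * I)
      = ((r * Real.cos θ : ℝ) : ℂ) + ((r * Real.sin θ : ℝ) : ℂ) * I := by
  rw [Complex.exp_add, Complex.exp_mul_I, ← Complex.ofReal_exp, Real.exp_log hr,
    ← Complex.ofReal_cos, ← Complex.ofReal_sin]
  push_cast
  ring

lemma wnd_base {q : Plane} (hq0 : q 0 = 1/2) (hq1 : q 1 = 1/2) :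
    Wnd (fun t => toC (uf t) - toC q) (2 * Real.pi * I) := by
  have hr : ∀ t : ℝ, (0:ℝ) < 1 / (2 * mf t) := fun t => by
    have := mf_pos t; positivity
  refine ⟨fun t => ((Real.log (1/(2 * mf t)) : ℝ) : ℂ) + ((θf t : ℝ):ℂ) * I, ?_, ?_, ?_⟩
  · apply Continuous.continuousOn
    apply Continuous.add
    · apply Complex.continuous_ofReal.comp
      exact Continuous.log (continuous_const.div (continuous_const.mul mf_cont) mf_ne)
        (fun t => ne_of_gt (hr t))
    · exact (Complex.continuous_ofReal.comp (by unfold θf; continuity)).mul continuous_const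
  · intro t _
    rw [exp_polar _ _ (hr t)]
    have h1 : (1:ℝ)/(2 * mf t) * Real.cos (θf t) = uf t 0 - q 0 := by
      rw [uf0, hq0]; unfold cof; ring
    have h2 : (1:ℝ)/(2 * mf t) * Real.sin (θf t) = uf t 1 - q 1 := by
      rw [uf1, hq1]; unfold sif; ring
    rw [h1, h2]
    unfold toC
    push_cast
    ring
  · show (((Real.log (1/(2 * mf 1)) : ℝ) : ℂ) + ((θf 1 : ℝ):ℂ) * I)
        - (((Real.log (1/(2 * mf 0)) : ℝ) : ℂ) + ((θf 0 : ℝ):ℂ) * I) = 2 * Real.pi * I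
    rw [show mf 1 = mf 0 from mf01.symm, show θf 1 = 2*Real.pi by unfold θf; ring,
      show θf 0 = 0 by unfold θf; ring]
    push_cast
    ring

end AuxGeom


section MainProof
open Complex

/-- If `D ≠ {0,…,N−1}²` and every loop in `K⁽¹⁾` is null-homotopic in `K⁽¹⁾`,
then `K` does not contain the boundary of the unit square. -/
theorem stmt7 (N : ℕ) (hN : 2 ≤ N) (D : Finset (ℤ × ℤ)) (hD : IsDigitSet N D)
    (hDne : ∃ d : ℤ × ℤ,
      (0 ≤ d.1 ∧ d.1 ≤ (N : ℤ) - 1 ∧ 0 ≤ d.2 ∧ d.2 ≤ (N : ℤ) - 1) ∧ d ∉ D)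
    (h1 : TrivialPi1 (approx N D 1)) :
    ¬ frontier unitSq ⊆ FS N D := by
  intro hsub
  obtain ⟨d, ⟨hd1, hd2, hd3, hd4⟩, hdD⟩ := hDne
  have hNpos : (0:ℝ) < N := by
    have : 0 < N := by omega
    exact_mod_cast this
  set p0 : ℝ := ((d.1:ℝ) + 1/2) / N with hp0def
  set p1 : ℝ := ((d.2:ℝ) + 1/2) / N with hp1def
  set p : Plane := zpt p0 p1 1 with hpdef
  have hp0 : p 0 = p0 := by rw [hpdef, zpt0]; ring
  have hp1 : p 1 = p1 := by rw [hpdef, zpt1]; ring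
  have hd1R : (0:ℝ) ≤ (d.1:ℝ) := by exact_mod_cast hd1
  have hd2R : (d.1:ℝ) ≤ (N:ℝ) - 1 := by
    have : ((d.1:ℤ):ℝ) ≤ (((N:ℤ) - 1 : ℤ):ℝ) := by exact_mod_cast hd2
    push_cast at this
    linarith
  have hd3R : (0:ℝ) ≤ (d.2:ℝ) := by exact_mod_cast hd3
  have hd4R : (d.2:ℝ) ≤ (N:ℝ) - 1 := by
    have : ((d.2:ℤ):ℝ) ≤ (((N:ℤ) - 1 : ℤ):ℝ) := by exact_mod_cast hd4
    push_cast at this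
    linarith
  have hp0I : p0 ∈ Ioo (0:ℝ) 1 := by
    constructor
    · rw [hp0def]; positivity
    · rw [hp0def, div_lt_one hNpos]; linarith
  have hp1I : p1 ∈ Ioo (0:ℝ) 1 := by
    constructor
    · rw [hp1def]; positivity
    · rw [hp1def, div_lt_one hNpos]; linarith
  -- frontier ⊆ K⁽¹⁾
  have hK1 : frontier unitSq ⊆ approx N D 1 := by
    intro x hx
    have hx' := hsub hx
    rw [FS, Set.mem_iInter] at hx'
    exact hx' 0
  -- the missing-cell center is not in K⁽¹⁾
  have hp : p ∉ approx N D 1 := by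
    intro hmem
    have hrw : approx N D 1 = ⋃ e ∈ D, (fun x => (N:ℝ)⁻¹ • (x + emb e)) '' approx N D 0 := rfl
    rw [hrw] at hmem
    simp only [Set.mem_iUnion, Set.mem_image] at hmem
    obtain ⟨e, heD, y, hy, hye⟩ := hmem
    have hy' : y ∈ unitSq := hy
    have hc0 := congrArg (fun v : Plane => v 0) hye
    have hc1 := congrArg (fun v : Plane => v 1) hye
    simp only [PiLp.smul_apply, PiLp.add_apply, smul_eq_mul] at hc0 hc1
    have he0 : emb e 0 = (e.1:ℝ) := rfl
    have he1 : emb e 1 = (e.2:ℝ) := rfl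
    rw [he0, hp0, hp0def] at hc0
    rw [he1, hp1, hp1def] at hc1
    have hNne : (N:ℝ) ≠ 0 := ne_of_gt hNpos
    have hy0 : y 0 + (e.1:ℝ) = (d.1:ℝ) + 1/2 := by
      field_simp at hc0
      have h2N : (2:ℝ) * N ≠ 0 := by positivity
      apply mul_right_cancel₀ h2N
      linear_combination (N:ℝ) * hc0
    have hy1 : y 1 + (e.2:ℝ) = (d.2:ℝ) + 1/2 := by
      field_simp at hc1
      have h2N : (2:ℝ) * N ≠ 0 := by positivity
      apply mul_right_cancel₀ h2N
      linear_combination (N:ℝ) * hc1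
    obtain ⟨⟨hy00, hy01⟩, ⟨hy10, hy11⟩⟩ := hy'
    have habs0 : |((d.1 - e.1 : ℤ):ℝ)| < 1 := by
      push_cast
      rw [abs_lt]
      constructor <;> linarith
    have habs1 : |((d.2 - e.2 : ℤ):ℝ)| < 1 := by
      push_cast
      rw [abs_lt]
      constructor <;> linarith
    have hz0 : |d.1 - e.1| < 1 := by exact_mod_cast habs0
    have hz1 : |d.2 - e.2| < 1 := by exact_mod_cast habs1
    have heq : e = d := by
      have ha := abs_lt.1 hz0
      have hb := abs_lt.1 hz1
      have h01 : e.1 = d.1 := by omega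
      have h02 : e.2 = d.2 := by omega
      exact Prod.ext h01 h02
    rw [heq] at heD
    exact hdD heD
  -- the boundary loop, as a loop in K⁽¹⁾
  have humem : ∀ t : ℝ, uf t ∈ approx N D 1 := fun t => hK1 (uf_mem_frontier t)
  let x₀ : approx N D 1 := ⟨uf 0, humem 0⟩
  let P : Path x₀ x₀ :=
    { toFun := fun t => ⟨uf t, humem t⟩
      continuous_toFun := (uf_cont.comp continuous_subtype_val).subtype_mk _
      source' := rfl
      target' := Subtype.ext uf01.symm }
  obtain ⟨F⟩ := h1 x₀ P
  set π01 : ℝ → unitInterval := fun r => Set.projIcc (0:ℝ) 1 zero_le_one r with hπdef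
  have hπclmp : ∀ r, π01 (clmp r) = π01 r := by
    intro r
    rcases le_total r 0 with h | h
    · have hcl : clmp r = 0 := by
        unfold clmp
        rw [max_eq_right h, min_eq_left zero_le_one]
      simp only [hπdef]
      rw [hcl, Set.projIcc_left, Set.projIcc_of_le_left _ h]
    · rcases le_total r 1 with h2 | h2
      · rw [clmp_of_mem ⟨h, h2⟩]
      · have hcl : clmp r = 1 := by
          unfold clmp
          rw [min_eq_right (le_trans h2 (le_max_left r 0))]
        rw [hπdef]
        simp only
        rw [hcl, Set.projIcc_right, Set.projIcc_of_right_le _ h2]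
  have hπ0 : π01 0 = 0 := by simp only [hπdef]; rw [Set.projIcc_left]; rfl
  have hπ1 : π01 1 = 1 := by simp only [hπdef]; rw [Set.projIcc_right]; rfl
  set H2 : ℝ → ℝ → ℂ :=
    fun s t => toC ((F (π01 s, π01 t) : approx N D 1) : Plane) - toC p with hH2def
  have hH2ne : ∀ s t, H2 s t ≠ 0 := by
    intro s t
    apply sub_ne_zero.2
    intro h
    exact hp (toC_inj h ▸ (F (π01 s, π01 t)).2)
  have hH2loop : ∀ s, H2 s 0 = H2 s 1 := by
    intro s
    simp only [hH2def]
    rw [hπ0, hπ1, F.source, F.target]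
  have hH2cl : ∀ s t, H2 s t = H2 (clmp s) (clmp t) := by
    intro s t
    simp only [hH2def]
    rw [hπclmp, hπclmp]
  have hH2c : Continuous fun st : ℝ × ℝ => H2 st.1 st.2 := by
    apply Continuous.sub _ continuous_const
    apply toC_continuous.comp
    apply continuous_subtype_val.comp
    exact F.continuous.comp ((continuous_projIcc.comp continuous_fst).prodMk
      (continuous_projIcc.comp continuous_snd))
  obtain ⟨c', hc'⟩ := wnd_exists
    ((hH2c.comp (continuous_const.prodMk continuous_id)).continuousOn)
    (fun t _ => hH2ne 0 t)
  have h21 : Wnd (H2 1) c' := wnd_homotopy hH2c hH2ne hH2loop hH2cl hc'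
  have hx0ne : toC (x₀ : Plane) - toC p ≠ 0 := by
    apply sub_ne_zero.2
    intro h
    exact hp (toC_inj h ▸ x₀.2)
  have h21' : Wnd (H2 1) 0 := by
    refine ⟨fun _ => Complex.log (toC (x₀ : Plane) - toC p), continuousOn_const, ?_, by ring⟩
    intro t _
    rw [Complex.exp_log hx0ne]
    simp only [hH2def]
    rw [hπ1, F.apply_one]
    rfl
  have hc'0 : c' = 0 := wnd_unique h21 h21'
  have hB0 : Wnd (fun t => toC (uf t) - toC p) 0 := by
    apply wnd_congr _ (hc'0 ▸ hc')
    intro t ht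
    simp only [hH2def, Function.comp_apply, id_eq]
    rw [hπ0, F.apply_zero]
    have hv : ((π01 t : unitInterval) : ℝ) = t := by
      simp only [hπdef]
      rw [Set.projIcc_of_mem _ ht]
    show toC (uf ((π01 t : unitInterval) : ℝ)) - toC p = toC (uf t) - toC p
    rw [hv]
  -- the second homotopy: moving the puncture from the center to p
  have hz0c : zpt p0 p1 0 0 = 1/2 := by rw [zpt0]; ring
  have hz1c : zpt p0 p1 0 1 = 1/2 := by rw [zpt1]; ring
  have hA : Wnd (fun t => toC (uf t) - toC (zpt p0 p1 0)) (2 * Real.pi * I) :=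
    wnd_base hz0c hz1c
  have hzmem : ∀ s ∈ Icc (0:ℝ) 1,
      (zpt p0 p1 s) 0 ∈ Ioo (0:ℝ) 1 ∧ (zpt p0 p1 s) 1 ∈ Ioo (0:ℝ) 1 := by
    intro s hs
    rw [zpt0, zpt1]
    obtain ⟨hs0, hs1⟩ := hs
    obtain ⟨ha1, ha2⟩ := hp0I
    obtain ⟨hb1, hb2⟩ := hp1I
    refine ⟨⟨?_, ?_⟩, ⟨?_, ?_⟩⟩ <;> nlinarith
  set H3 : ℝ → ℝ → ℂ :=
    fun s t => toC (uf (clmp t)) - toC (zpt p0 p1 (clmp s)) with hH3def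
  have hH3ne : ∀ s t, H3 s t ≠ 0 := by
    intro s t
    apply sub_ne_zero.2
    intro h
    have heq := toC_inj h
    have hfr := uf_mem_frontier (clmp t)
    rw [unitSq_closed.frontier_eq] at hfr
    apply hfr.2
    rw [interior_unitSq, heq]
    exact ⟨(hzmem _ (clmp_mem s)).1, (hzmem _ (clmp_mem s)).2⟩
  have hcl0 : clmp 0 = 0 := clmp_of_mem (left_mem_Icc.2 zero_le_one)
  have hcl1 : clmp 1 = 1 := clmp_of_mem (right_mem_Icc.2 zero_le_one)
  have hH3loop : ∀ s, H3 s 0 = H3 s 1 := by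
    intro s
    simp only [hH3def]
    rw [hcl0, hcl1, uf01]
  have hH3cl : ∀ s t, H3 s t = H3 (clmp s) (clmp t) := by
    intro s t
    simp only [hH3def]
    rw [clmp_idem, clmp_idem]
  have hH3c : Continuous fun st : ℝ × ℝ => H3 st.1 st.2 := by
    apply Continuous.sub
    · exact toC_continuous.comp (uf_cont.comp (clmp_continuous.comp continuous_snd))
    · exact toC_continuous.comp ((zpt_cont p0 p1).comp (clmp_continuous.comp continuous_fst))
  have hH30 : Wnd (H3 0) (2 * Real.pi * I) := by
    apply wnd_congr _ hA
    intro t ht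
    simp only [hH3def]
    rw [clmp_of_mem ht, hcl0]
  have hH31 : Wnd (H3 1) (2 * Real.pi * I) :=
    wnd_homotopy hH3c hH3ne hH3loop hH3cl hH30
  have hB2 : Wnd (fun t => toC (uf t) - toC p) (2 * Real.pi * I) := by
    apply wnd_congr _ hH31
    intro t ht
    simp only [hH3def]
    rw [clmp_of_mem ht, hcl1, hpdef]
  have hcontra := wnd_unique hB2 hB0
  have him := congrArg Complex.im hcontra
  simp at him

end MainProof
end
end
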